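/- arXiv:1910.11153 — 3 statements merged into one kernel-verified Lean document; each statement's English description precedes it below -/
import Mathlib

section
/- Let q ≥ 0, τ ∈ (0,1], and w = (w₁, w₂) ∈ ℝ². Define λ(w) = 1/(1 + q|w|) and let D_τ(w) be the symmetric 2×2 matrix with entries D₁₁ = 1 + τ + (w₁²/(|w|² + τ))(λ(w) − 1), D₁₂ = D₂₁ = (w₁ w₂/(|w|² + τ))(λ(w) − 1), D₂₂ = 1 + τ + (w₂²/(|w|² + τ))(λ(w) − 1). Then for every ξ ∈ ℝ²: D_τ(w) ξ · ξ = (1 + τ)|ξ|² + (λ(w) − 1)(w · ξ)²/(|w|² + τ) ≥ (1/(1 + q|w|) + τ) |ξ|². -/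
/-!
`D_τ(w) = (1 + τ) I + (λ(w) - 1) / (|w|² + τ) · w wᵀ`, so its quadratic form is
`(1 + τ)|ξ|² + (λ(w) - 1)(w · ξ)² / (|w|² + τ)`. Since `λ(w) ≤ 1` and, by Cauchy–Schwarz,
`(w · ξ)² ≤ (|w|² + τ)|ξ|²`, the second term is at least `(λ(w) - 1)|ξ|²`.
-/

open Matrix
open scoped RealInnerProductSpace

theorem Matrix.smul_one_add_smul_vecMulVec_mulVec_dotProduct {n : Type*} [Fintype n]
    [DecidableEq n] (a c : ℝ) (w ξ : n → ℝ) :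
    (a • (1 : Matrix n n ℝ) + c • vecMulVec w w) *ᵥ ξ ⬝ᵥ ξ =
      a * (ξ ⬝ᵥ ξ) + c * (w ⬝ᵥ ξ) ^ 2 := by
  simp only [add_mulVec, smul_mulVec, one_mulVec, vecMulVec_mulVec, add_dotProduct,
    smul_dotProduct, smul_eq_mul]
  simp [sq]

theorem EuclideanSpace.dotProduct_eq_inner {ι : Type*} [Fintype ι]
    (x y : EuclideanSpace ℝ ι) : (x : ι → ℝ) ⬝ᵥ y = ⟪x, y⟫ := by
  simp [EuclideanSpace.inner_eq_star_dotProduct, dotProduct_comm]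

theorem real_inner_sq_div_norm_sq_add_le {E : Type*} [NormedAddCommGroup E]
    [InnerProductSpace ℝ E] {τ : ℝ} (hτ : 0 ≤ τ) (w ξ : E) :
    ⟪w, ξ⟫ ^ 2 / (‖w‖ ^ 2 + τ) ≤ ‖ξ‖ ^ 2 := by
  refine div_le_of_le_mul₀ (by positivity) (by positivity) ?_
  calc ⟪w, ξ⟫ ^ 2 ≤ (‖w‖ * ‖ξ‖) ^ 2 := by
        rw [← sq_abs]
        gcongr
        exact abs_real_inner_le_norm w ξ
    _ ≤ ‖ξ‖ ^ 2 * (‖w‖ ^ 2 + τ) := by nlinarith [mul_nonneg (sq_nonneg ‖ξ‖) hτ]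

theorem stmt_5_general (q τ : ℝ) (hq : 0 ≤ q) (hτ0 : 0 < τ)
    (w : EuclideanSpace ℝ (Fin 2))
    (lam : ℝ) (hlam : lam = 1 / (1 + q * ‖w‖))
    (D : Matrix (Fin 2) (Fin 2) ℝ)
    (hD : D = !![1 + τ + (w 0) ^ 2 / (‖w‖ ^ 2 + τ) * (lam - 1),
                 (w 0) * (w 1) / (‖w‖ ^ 2 + τ) * (lam - 1);
                 (w 0) * (w 1) / (‖w‖ ^ 2 + τ) * (lam - 1),
                 1 + τ + (w 1) ^ 2 / (‖w‖ ^ 2 + τ) * (lam - 1)]) :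
    ∀ ξ : EuclideanSpace ℝ (Fin 2),
      D.mulVec ξ ⬝ᵥ (ξ : Fin 2 → ℝ) =
          (1 + τ) * ‖ξ‖ ^ 2 + (lam - 1) * ⟪w, ξ⟫ ^ 2 / (‖w‖ ^ 2 + τ) ∧
        D.mulVec ξ ⬝ᵥ (ξ : Fin 2 → ℝ) ≥ (1 / (1 + q * ‖w‖) + τ) * ‖ξ‖ ^ 2 := by
  intro ξ
  have hD_rankOne : D = (1 + τ) • (1 : Matrix (Fin 2) (Fin 2) ℝ) +
      ((lam - 1) / (‖w‖ ^ 2 + τ)) • vecMulVec w w := by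
    subst hD
    ext i j
    fin_cases i <;> fin_cases j <;> simp [vecMulVec] <;> ring
  have hquad : D.mulVec ξ ⬝ᵥ (ξ : Fin 2 → ℝ) =
      (1 + τ) * ‖ξ‖ ^ 2 + (lam - 1) * ⟪w, ξ⟫ ^ 2 / (‖w‖ ^ 2 + τ) := by
    rw [hD_rankOne, smul_one_add_smul_vecMulVec_mulVec_dotProduct,
      EuclideanSpace.dotProduct_eq_inner, EuclideanSpace.dotProduct_eq_inner,
      real_inner_self_eq_norm_sq, div_mul_eq_mul_div]
  have hlam_le_one : lam ≤ 1 := by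
    rw [hlam]
    exact div_le_one_of_le₀ (by simp only [le_add_iff_nonneg_right]; positivity) (by positivity)
  refine ⟨hquad, ?_⟩
  calc (1 / (1 + q * ‖w‖) + τ) * ‖ξ‖ ^ 2 = (1 + τ) * ‖ξ‖ ^ 2 + (lam - 1) * ‖ξ‖ ^ 2 := by
        rw [hlam]; ring
    _ ≤ (1 + τ) * ‖ξ‖ ^ 2 + (lam - 1) * (⟪w, ξ⟫ ^ 2 / (‖w‖ ^ 2 + τ)) := by
        gcongr (1 + τ) * ‖ξ‖ ^ 2 + ?_
        exact mul_le_mul_of_nonpos_left (real_inner_sq_div_norm_sq_add_le hτ0.le w ξ)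
          (sub_nonpos.mpr hlam_le_one)
    _ = D.mulVec ξ ⬝ᵥ (ξ : Fin 2 → ℝ) := by rw [hquad, mul_div_assoc]

/-- Identity and lower bound (3.5) for the regularized mobility matrix `D_τ(w)`. -/
theorem stmt_5 (q τ : ℝ) (hq : 0 ≤ q) (hτ0 : 0 < τ) (hτ1 : τ ≤ 1)
    (w : EuclideanSpace ℝ (Fin 2))
    (lam : ℝ) (hlam : lam = 1 / (1 + q * ‖w‖))
    (D : Matrix (Fin 2) (Fin 2) ℝ)
    (hD : D = !![1 + τ + (w 0) ^ 2 / (‖w‖ ^ 2 + τ) * (lam - 1),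
                 (w 0) * (w 1) / (‖w‖ ^ 2 + τ) * (lam - 1);
                 (w 0) * (w 1) / (‖w‖ ^ 2 + τ) * (lam - 1),
                 1 + τ + (w 1) ^ 2 / (‖w‖ ^ 2 + τ) * (lam - 1)]) :
    ∀ ξ : EuclideanSpace ℝ (Fin 2),
      D.mulVec ξ ⬝ᵥ (ξ : Fin 2 → ℝ) =
          (1 + τ) * ‖ξ‖ ^ 2 + (lam - 1) * ⟪w, ξ⟫ ^ 2 / (‖w‖ ^ 2 + τ) ∧
        D.mulVec ξ ⬝ᵥ (ξ : Fin 2 → ℝ) ≥ (1 / (1 + q * ‖w‖) + τ) * ‖ξ‖ ^ 2 :=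
  stmt_5_general q τ hq hτ0 w lam hlam D hD
end

section
/- Let 1 < p < 2 and τ ∈ (0,1). For all ξ, η ∈ ℝ² one has ((|η|² + τ)^{(p−2)/2} η − (|ξ|² + τ)^{(p−2)/2} ξ) · (η − ξ) ≥ (p−1)(1 + |ξ|² + |η|²)^{(p−2)/2} |η − ξ|². -/
open scoped RealInnerProductSpace

/-- Scalar core of the monotonicity inequality. -/
lemma scalar_mono_aux (p τ A B C : ℝ) (hp1 : 1 < p) (hp2 : p < 2)
    (hτ0 : 0 < τ) (hτ1 : τ < 1) (hB : 0 ≤ B)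
    (hq : ∀ t : ℝ, 0 ≤ C + 2 * A * t + B * t ^ 2)
    (hCS : ∀ t : ℝ, (A + B * t) ^ 2 ≤ (C + 2 * A * t + B * t ^ 2) * B) :
    (C + 2 * A + B + τ) ^ ((p - 2) / 2) * (A + B) - (C + τ) ^ ((p - 2) / 2) * A
      ≥ (p - 1) * (1 + C + (C + 2 * A + B)) ^ ((p - 2) / 2) * B := by
  set α : ℝ := (p - 2) / 2 with hα
  have hαneg : α < 0 := by rw [hα]; linarith
  have hC : 0 ≤ C := by have := hq 0; linarith [hq 0]; 
  have hD : 0 ≤ C + 2 * A + B := by have := hq 1; nlinarith [hq 1]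
  have hqpos : ∀ t : ℝ, 0 < C + 2 * A * t + B * t ^ 2 + τ := fun t => by
    have := hq t; linarith
  set m : ℝ := (p - 1) * (1 + C + (C + 2 * A + B)) ^ α with hm
  set φ : ℝ → ℝ := fun t => (C + 2 * A * t + B * t ^ 2 + τ) ^ α * (A + B * t) with hφ
  set φ' : ℝ → ℝ := fun t =>
    (2 * A + 2 * B * t) * α * (C + 2 * A * t + B * t ^ 2 + τ) ^ (α - 1) * (A + B * t)
      + (C + 2 * A * t + B * t ^ 2 + τ) ^ α * B with hφ'
  have hder : ∀ t : ℝ, HasDerivAt φ (φ' t) t := by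
    intro t
    have hh : HasDerivAt (fun s : ℝ => C + (2 * A * id s + B * s ^ 2) + τ)
        (2 * A * 1 + B * ((2 : ℕ) * t ^ (2 - 1))) t :=
      ((((hasDerivAt_id t).const_mul (2 * A)).add
        ((hasDerivAt_pow 2 t).const_mul B)).const_add C).add_const τ
    have hfun : (fun s : ℝ => C + (2 * A * id s + B * s ^ 2) + τ)
        = fun s : ℝ => C + 2 * A * s + B * s ^ 2 + τ := by
      funext s; simp only [id_eq]; ring
    rw [hfun] at hh
    have hval : (2 * A * 1 + B * ((2 : ℕ) * t ^ (2 - 1))) = 2 * A + 2 * B * t := by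
      push_cast; ring
    rw [hval] at hh
    have h2 : HasDerivAt (fun t : ℝ => (C + 2 * A * t + B * t ^ 2 + τ) ^ α)
        ((2 * A + 2 * B * t) * α * (C + 2 * A * t + B * t ^ 2 + τ) ^ (α - 1)) t :=
      hh.rpow_const (Or.inl (ne_of_gt (hqpos t)))
    have h3 : HasDerivAt (fun t : ℝ => A + B * t) B t := by
      simpa using ((hasDerivAt_id t).const_mul B).const_add A
    exact h2.mul h3
  have hbound : ∀ t ∈ Set.Icc (0:ℝ) 1, m * B ≤ φ' t := by
    intro t ht
    set Q : ℝ := C + 2 * A * t + B * t ^ 2 + τ with hQ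
    have hQpos : 0 < Q := hqpos t
    have hQle : Q ≤ 1 + C + (C + 2 * A + B) := by
      have h0 : B * t * (t - 1) ≤ 0 := by
        have := mul_nonneg (mul_nonneg hB ht.1) (by linarith [ht.2] : (0:ℝ) ≤ 1 - t)
        nlinarith
      have h1 : (1 - t) * C + t * (C + 2 * A + B) ≤ C + (C + 2 * A + B) := by
        nlinarith [mul_nonneg ht.1 hC, mul_nonneg (by linarith [ht.2] : (0:ℝ) ≤ 1 - t) hD]
      have h2 : C + 2 * A * t + B * t ^ 2 ≤ (1 - t) * C + t * (C + 2 * A + B) := by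
        nlinarith
      rw [hQ]; linarith
    have e2 : Q ^ α = Q ^ (α - 1) * Q := by
      rw [← Real.rpow_add_one (ne_of_gt hQpos)]; ring_nf
    have key : (p - 1) * Q ^ α * B ≤ φ' t := by
      have e1 : φ' t = Q ^ (α - 1) * (2 * α * (A + B * t) ^ 2 + Q * B) := by
        rw [hφ']
        simp only [← hQ]
        rw [e2]; ring
      rw [e1, e2]
      have hQp : (0:ℝ) ≤ Q ^ (α - 1) := le_of_lt (Real.rpow_pos_of_pos hQpos _)
      have hcs := hCS t
      have h2α : 2 * α * (Q * B) ≤ 2 * α * (A + B * t) ^ 2 := by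
        have hQB : (A + B * t) ^ 2 ≤ Q * B := by
          have : (C + 2 * A * t + B * t ^ 2) * B ≤ Q * B := by
            apply mul_le_mul_of_nonneg_right _ hB
            rw [hQ]; linarith
          linarith
        nlinarith
      have hp1' : p - 1 = 2 * α + 1 := by rw [hα]; ring
      calc (p - 1) * (Q ^ (α - 1) * Q) * B
          = Q ^ (α - 1) * (2 * α * (Q * B) + Q * B) := by rw [hp1']; ring
        _ ≤ Q ^ (α - 1) * (2 * α * (A + B * t) ^ 2 + Q * B) := by
            apply mul_le_mul_of_nonneg_left _ hQp
            linarith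
    have hmono : m * B ≤ (p - 1) * Q ^ α * B := by
      apply mul_le_mul_of_nonneg_right _ hB
      rw [hm]
      apply mul_le_mul_of_nonneg_left _ (by linarith : (0:ℝ) ≤ p - 1)
      exact Real.rpow_le_rpow_of_nonpos hQpos hQle (le_of_lt hαneg)
    linarith
  set ψ : ℝ → ℝ := fun t => φ t - m * B * t with hψ
  have hψder : ∀ t : ℝ, HasDerivAt ψ (φ' t - m * B) t := by
    intro t
    have h1 : HasDerivAt (fun s : ℝ => m * B * s) (m * B) t := by
      simpa using (hasDerivAt_id t).const_mul (m * B)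
    exact (hder t).sub h1
  have hψmono : MonotoneOn ψ (Set.Icc (0:ℝ) 1) := by
    apply monotoneOn_of_deriv_nonneg (convex_Icc 0 1)
    · exact fun t _ => ((hψder t).continuousAt).continuousWithinAt
    · exact fun t _ => ((hψder t).differentiableAt).differentiableWithinAt
    · intro t ht
      rw [(hψder t).deriv]
      rw [interior_Icc] at ht
      have := hbound t (Set.mem_Icc_of_Ioo ht)
      linarith
  have h01 : ψ 0 ≤ ψ 1 :=
    hψmono (Set.left_mem_Icc.mpr zero_le_one) (Set.right_mem_Icc.mpr zero_le_one) zero_le_one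
  have hφ0 : φ 0 = (C + τ) ^ α * A := by rw [hφ]; norm_num
  have hφ1 : φ 1 = (C + 2 * A + B + τ) ^ α * (A + B) := by rw [hφ]; norm_num
  have hψ0 : ψ 0 = φ 0 := by rw [hψ]; norm_num
  have hψ1 : ψ 1 = φ 1 - m * B := by rw [hψ]; norm_num
  rw [hψ0, hψ1, hφ0, hφ1] at h01
  linarith

/-- The regularized monotonicity inequality (3.27) from Claim 4 of the paper. -/
theorem stmt_8 (p τ : ℝ) (hp1 : 1 < p) (hp2 : p < 2) (hτ0 : 0 < τ) (hτ1 : τ < 1)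
    (ξ η : EuclideanSpace ℝ (Fin 2)) :
    ⟪((‖η‖ ^ 2 + τ) ^ ((p - 2) / 2)) • η - ((‖ξ‖ ^ 2 + τ) ^ ((p - 2) / 2)) • ξ, η - ξ⟫ ≥
      (p - 1) * (1 + ‖ξ‖ ^ 2 + ‖η‖ ^ 2) ^ ((p - 2) / 2) * ‖η - ξ‖ ^ 2 := by
  set v : EuclideanSpace ℝ (Fin 2) := η - ξ with hv
  have hq : ∀ t : ℝ, ‖ξ‖ ^ 2 + 2 * ⟪ξ, v⟫ * t + ‖v‖ ^ 2 * t ^ 2 = ‖ξ + t • v‖ ^ 2 := by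
    intro t
    rw [norm_add_sq_real, real_inner_smul_right, norm_smul, Real.norm_eq_abs,
      mul_pow, sq_abs]
    ring
  have hCS : ∀ t : ℝ, (⟪ξ, v⟫ + ‖v‖ ^ 2 * t) ^ 2
      ≤ (‖ξ‖ ^ 2 + 2 * ⟪ξ, v⟫ * t + ‖v‖ ^ 2 * t ^ 2) * ‖v‖ ^ 2 := by
    intro t
    have hl : ⟪ξ, v⟫ + ‖v‖ ^ 2 * t = ⟪ξ + t • v, v⟫ := by
      rw [inner_add_left, real_inner_smul_left, real_inner_self_eq_norm_sq]; ring
    rw [hl, hq t]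
    have h := abs_real_inner_le_norm (ξ + t • v) v
    calc ⟪ξ + t • v, v⟫ ^ 2 = |⟪ξ + t • v, v⟫| ^ 2 := (sq_abs _).symm
      _ ≤ (‖ξ + t • v‖ * ‖v‖) ^ 2 := by
          apply pow_le_pow_left₀ (abs_nonneg _) h
      _ = ‖ξ + t • v‖ ^ 2 * ‖v‖ ^ 2 := by ring
  have hD : ‖ξ‖ ^ 2 + 2 * ⟪ξ, v⟫ + ‖v‖ ^ 2 = ‖η‖ ^ 2 := by
    have := hq 1
    simp only [one_pow, mul_one, one_smul] at this
    rw [this]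
    have hη : ξ + v = η := by rw [hv]; abel
    rw [hη]
  have key := scalar_mono_aux p τ ⟪ξ, v⟫ (‖v‖ ^ 2) (‖ξ‖ ^ 2) hp1 hp2 hτ0 hτ1
    (by positivity) (fun t => by rw [hq t]; positivity) hCS
  have hLHS : ⟪((‖η‖ ^ 2 + τ) ^ ((p - 2) / 2)) • η - ((‖ξ‖ ^ 2 + τ) ^ ((p - 2) / 2)) • ξ, v⟫
      = (‖η‖ ^ 2 + τ) ^ ((p - 2) / 2) * (⟪ξ, v⟫ + ‖v‖ ^ 2) - (‖ξ‖ ^ 2 + τ) ^ ((p - 2) / 2) * ⟪ξ, v⟫ := by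
    rw [inner_sub_left, real_inner_smul_left, real_inner_smul_left]
    have hηv : ⟪η, v⟫ = ⟪ξ, v⟫ + ‖v‖ ^ 2 := by
      have hη : η = ξ + v := by rw [hv]; module
      rw [hη, inner_add_left, real_inner_self_eq_norm_sq]
    rw [hηv]
  rw [hLHS]
  have h1 : ‖ξ‖ ^ 2 + 2 * ⟪ξ, v⟫ + ‖v‖ ^ 2 + τ = ‖η‖ ^ 2 + τ := by rw [hD]
  have h2 : 1 + ‖ξ‖ ^ 2 + (‖ξ‖ ^ 2 + 2 * ⟪ξ, v⟫ + ‖v‖ ^ 2) = 1 + ‖ξ‖ ^ 2 + ‖η‖ ^ 2 := by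
    rw [hD]
  rw [h1, h2] at key
  linarith
end

section
/- Let 1 < p < 2, τ > 0, and w = (w₁, w₂) ∈ ℝ². Set G_p(w) = 1 + (p−2) w₂²/(|w|² + τ), G_1(w) = 1 − w₂²/(|w|² + τ), and H_p(w) = (|w|² + τ)^{(p−2)/2} G_p(w) + (|w|² + τ)^{−1/2} G_1(w). Then (|w|² + τ)^{(p−1)/2}/(1 + (|w|² + τ)^{(p−1)/2}) ≤ (|w|² + τ)^{(p−2)/2} / H_p(w) ≤ 1/(p−1). -/
/-- The two-sided bounds (4.22)-(4.23) in the regularity proof of the paper. -/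
theorem stmt_14 (p τ : ℝ) (hp1 : 1 < p) (hp2 : p < 2) (hτ : 0 < τ)
    (w : EuclideanSpace ℝ (Fin 2))
    (Gp G1 Hp : ℝ)
    (hGp : Gp = 1 + (p - 2) * (w 1) ^ 2 / (‖w‖ ^ 2 + τ))
    (hG1 : G1 = 1 - (w 1) ^ 2 / (‖w‖ ^ 2 + τ))
    (hHp : Hp = (‖w‖ ^ 2 + τ) ^ ((p - 2) / 2) * Gp + (‖w‖ ^ 2 + τ) ^ (-(1 : ℝ) / 2) * G1) :
    (‖w‖ ^ 2 + τ) ^ ((p - 1) / 2) / (1 + (‖w‖ ^ 2 + τ) ^ ((p - 1) / 2)) ≤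
        (‖w‖ ^ 2 + τ) ^ ((p - 2) / 2) / Hp ∧
      (‖w‖ ^ 2 + τ) ^ ((p - 2) / 2) / Hp ≤ 1 / (p - 1) := by
  set S : ℝ := ‖w‖ ^ 2 + τ with hSdef
  have hS : 0 < S := by positivity
  have hw1 : (w 1) ^ 2 ≤ ‖w‖ ^ 2 := by
    have h := EuclideanSpace.norm_eq w
    have hnn : (0:ℝ) ≤ ∑ i : Fin 2, w i ^ 2 := by positivity
    have h2 : ‖w‖ ^ 2 = ∑ i : Fin 2, w i ^ 2 := by
      rw [h]
      simp only [Real.norm_eq_abs, sq_abs]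
      rw [Real.sq_sqrt hnn]
    rw [h2, Fin.sum_univ_two]
    nlinarith [sq_nonneg (w 0)]
  have hwS : (w 1) ^ 2 ≤ S := by
    have : ‖w‖ ^ 2 ≤ S := by simp [hSdef]; linarith
    linarith
  set a : ℝ := S ^ ((p - 2) / 2) with ha
  set b : ℝ := S ^ (-(1:ℝ) / 2) with hb
  set c : ℝ := S ^ ((p - 1) / 2) with hc
  have hapos : 0 < a := Real.rpow_pos_of_pos hS _
  have hbpos : 0 < b := Real.rpow_pos_of_pos hS _
  have hcpos : 0 < c := Real.rpow_pos_of_pos hS _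
  have hGp_lb : p - 1 ≤ Gp := by
    rw [hGp]
    have h3 : p - 2 ≤ (p - 2) * (w 1) ^ 2 / S := by
      rw [le_div_iff₀ hS]; nlinarith
    linarith
  have hGp_ub : Gp ≤ 1 := by
    rw [hGp]
    have : (p - 2) * (w 1) ^ 2 / S ≤ 0 := by
      apply div_nonpos_of_nonpos_of_nonneg
      · nlinarith [sq_nonneg (w 1)]
      · linarith
    linarith
  have hG1_lb : 0 ≤ G1 := by
    rw [hG1]
    have : (w 1) ^ 2 / S ≤ 1 := by rw [div_le_one hS]; exact hwS
    linarith
  have hG1_ub : G1 ≤ 1 := by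
    rw [hG1]
    have : 0 ≤ (w 1) ^ 2 / S := by positivity
    linarith
  have hHp_lb : a * (p - 1) ≤ Hp := by
    rw [hHp]
    nlinarith
  have hHp_pos : 0 < Hp := lt_of_lt_of_le (by nlinarith) hHp_lb
  have hHp_ub : Hp ≤ a + b := by
    rw [hHp]; nlinarith
  have hcb : c * b = a := by
    rw [hc, hb, ha, ← Real.rpow_add hS]
    ring_nf
  constructor
  · rw [div_le_div_iff₀ (by positivity) hHp_pos]
    have h4 : c * Hp ≤ c * (a + b) := by
      exact mul_le_mul_of_nonneg_left hHp_ub hcpos.le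
    nlinarith [h4, hcb]
  · rw [div_le_div_iff₀ hHp_pos (by linarith), one_mul]
    linarith [hHp_lb]
end
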